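/- If continuous maps A, B : [a,b] → L(E,ℝ) satisfy ∫_a^b (A(t)·u(t) + B(t)·u'(t)) dt = 0 for all C¹ functions u : [a,b] → E with u(a) = u(b) = 0, and B is differentiable, then B'(t) = A(t) for all t. -/

import Mathlib

open Set MeasureTheory intervalIntegral

/-- Continuous extension of a function continuous on `Icc a b`. -/
lemma dbr_exists_ext {a b : ℝ} (hab : a ≤ b) {f : ℝ → ℝ}
    (hf : ContinuousOn f (Set.Icc a b)) :
    ∃ g : ℝ → ℝ, Continuous g ∧ Set.EqOn g f (Set.Icc a b) := by
  refine ⟨fun t => f ((Set.projIcc a b hab t : Set.Icc a b) : ℝ), ?_, ?_⟩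
  · exact (continuousOn_iff_continuous_restrict.1 hf).comp continuous_projIcc
  · intro t ht
    simp [Set.projIcc_of_mem hab ht]

/-- FTC for continuous integrand. -/
lemma dbr_ftc {f : ℝ → ℝ} (hf : Continuous f) (a t : ℝ) :
    HasDerivAt (fun u => ∫ s in a..u, f s) (f t) t :=
  intervalIntegral.integral_hasDerivAt_right (hf.intervalIntegrable a t)
    (hf.stronglyMeasurableAtFilter _ _) hf.continuousAt

/-- du Bois-Reymond / Euler–Lagrange lemma in Banach space form: if
`∫ (A(t)·u(t) + B(t)·u'(t)) dt = 0` for all `C¹` maps `u` vanishing at the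
endpoints, and `B` is differentiable with derivative `B'`, then `B' = A`. -/
theorem duBoisReymond_lemma
    (E : Type*) [NormedAddCommGroup E] [NormedSpace ℝ E]
    (a b : ℝ) (hab : a < b)
    (A B B' : ℝ → E →L[ℝ] ℝ)
    (hA : ContinuousOn A (Set.Icc a b))
    (hB : ContinuousOn B (Set.Icc a b))
    (hB' : ∀ t ∈ Set.Icc a b, HasDerivAt B (B' t) t)
    (h : ∀ u : ℝ → E, ContDiff ℝ 1 u → u a = 0 → u b = 0 →
      (∫ t in a..b, (A t (u t) + B t (deriv u t))) = 0) :
    ∀ t ∈ Set.Icc a b, B' t = A t := by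
  intro t₀ ht₀
  ext v
  -- continuous extensions of `t ↦ A t v` and `t ↦ B t v`
  obtain ⟨fA, hfA, hfAeq⟩ := dbr_exists_ext hab.le
    (hA.clm_apply continuousOn_const : ContinuousOn (fun t => A t v) (Set.Icc a b))
  obtain ⟨g, hg, hgeq⟩ := dbr_exists_ext hab.le
    (hB.clm_apply continuousOn_const : ContinuousOn (fun t => B t v) (Set.Icc a b))
  set F : ℝ → ℝ := fun t => ∫ s in a..t, fA s with hF_def
  have HF : ∀ t, HasDerivAt F (fA t) t := dbr_ftc hfA a
  have hFcont : Continuous F :=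
    continuous_iff_continuousAt.2 fun t => (HF t).differentiableAt.continuousAt
  set q : ℝ → ℝ := fun t => g t - F t with hq_def
  have hqcont : Continuous q := hg.sub hFcont
  set c : ℝ := (∫ s in a..b, q s) / (b - a) with hc_def
  set H : ℝ → ℝ := fun t => q t - c with hH_def
  have hHcont : Continuous H := hqcont.sub continuous_const
  set φ : ℝ → ℝ := fun t => ∫ s in a..t, H s with hφ_def
  have Hφ : ∀ t, HasDerivAt φ (H t) t := dbr_ftc hHcont a
  have hφa : φ a = 0 := integral_same
  have hφb : φ b = 0 := by
    have hne : b - a ≠ 0 := sub_ne_zero.2 hab.ne'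
    have : φ b = (∫ s in a..b, q s) - c * (b - a) := by
      simp only [hφ_def, hH_def]
      rw [intervalIntegral.integral_sub (hqcont.intervalIntegrable a b)
        (intervalIntegrable_const)]
      rw [intervalIntegral.integral_const, smul_eq_mul, mul_comm]
    rw [this, hc_def, div_mul_cancel₀ _ hne, sub_self]
  have hφcont : Continuous φ :=
    continuous_iff_continuousAt.2 fun t => (Hφ t).differentiableAt.continuousAt
  -- the test function
  set u : ℝ → E := fun t => φ t • v with hu_def
  have hφC1 : ContDiff ℝ 1 φ := by
    rw [contDiff_one_iff_deriv]
    refine ⟨fun t => (Hφ t).differentiableAt, ?_⟩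
    have : deriv φ = H := funext fun t => (Hφ t).deriv
    rw [this]; exact hHcont
  have huC1 : ContDiff ℝ 1 u := hφC1.smul contDiff_const
  have hderivu : ∀ t, deriv u t = H t • v := fun t => ((Hφ t).smul_const v).deriv
  have hua : u a = 0 := by simp [hu_def, hφa]
  have hub : u b = 0 := by simp [hu_def, hφb]
  have key : (∫ t in a..b, (φ t * fA t + H t * g t)) = 0 := by
    have := h u huC1 hua hub
    rw [← this]
    refine intervalIntegral.integral_congr fun t ht => ?_
    rw [Set.uIcc_of_le hab.le] at ht
    rw [hderivu t]
    have e1 : A t (u t) = φ t * (A t v) := by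
      simp [hu_def, smul_eq_mul]
    have e2 : B t (H t • v) = H t * (B t v) := by
      simp [smul_eq_mul]
    rw [e1, e2]
    simp only [hfAeq ht, hgeq ht]
  -- integration by parts : ∫ fA * φ + F * H = 0
  have ibp : (∫ t in a..b, (fA t * φ t + F t * H t)) = 0 := by
    have : ∀ t ∈ Set.uIcc a b, HasDerivAt (fun s => F s * φ s)
        (fA t * φ t + F t * H t) t := fun t _ => (HF t).mul (Hφ t)
    have := intervalIntegral.integral_eq_sub_of_hasDerivAt this
      (((hfA.mul hφcont).add (hFcont.mul hHcont)).intervalIntegrable a b)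
    rw [this, hφb, hφa]
    simp [hF_def]
  -- hence ∫ H * (g - F) = 0 , i.e. ∫ H * q = 0
  have hHq : (∫ t in a..b, H t * q t) = 0 := by
    have e1 : (∫ t in a..b, (φ t * fA t + H t * g t)) =
        (∫ t in a..b, φ t * fA t) + ∫ t in a..b, H t * g t :=
      intervalIntegral.integral_add ((hφcont.mul hfA).intervalIntegrable a b)
        ((hHcont.mul hg).intervalIntegrable a b)
    have e2 : (∫ t in a..b, (fA t * φ t + F t * H t)) =
        (∫ t in a..b, fA t * φ t) + ∫ t in a..b, F t * H t :=
      intervalIntegral.integral_add ((hfA.mul hφcont).intervalIntegrable a b)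
        ((hFcont.mul hHcont).intervalIntegrable a b)
    have e3 : (∫ t in a..b, φ t * fA t) = ∫ t in a..b, fA t * φ t := by
      simp [mul_comm]
    have e4 : (∫ t in a..b, H t * q t) =
        (∫ t in a..b, H t * g t) - ∫ t in a..b, F t * H t := by
      rw [← intervalIntegral.integral_sub
        (by exact (hHcont.mul hg).intervalIntegrable a b :
          IntervalIntegrable (fun t => H t * g t) volume a b)
        (by exact (hFcont.mul hHcont).intervalIntegrable a b :
          IntervalIntegrable (fun t => F t * H t) volume a b)]
      refine intervalIntegral.integral_congr fun t _ => ?_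
      simp only [hq_def]; ring
    rw [e4]
    rw [e1, e3] at key
    rw [e2] at ibp
    linarith
  -- ∫ H² = 0
  have hH2 : (∫ t in a..b, H t ^ 2) = 0 := by
    have eH : (∫ t in a..b, H t) = 0 := hφb
    have : (∫ t in a..b, H t ^ 2) =
        (∫ t in a..b, H t * q t) - c * ∫ t in a..b, H t := by
      rw [← intervalIntegral.integral_const_mul,
        ← intervalIntegral.integral_sub
          (by exact (hHcont.mul hqcont).intervalIntegrable a b :
            IntervalIntegrable (fun t => H t * q t) volume a b)
          (by exact (continuous_const.mul hHcont).intervalIntegrable a b :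
            IntervalIntegrable (fun t => c * H t) volume a b)]
      refine intervalIntegral.integral_congr fun t _ => ?_
      simp only [hH_def]; ring
    rw [this, hHq, eH]; ring
  -- H vanishes on [a,b]
  have hH0 : ∀ t ∈ Set.Icc a b, H t = 0 := by
    intro t ht
    set ψ : ℝ → ℝ := fun t => ∫ s in a..t, H s ^ 2 with hψ_def
    have hψd : ∀ s, HasDerivAt ψ (H s ^ 2) s := dbr_ftc (hHcont.pow 2) a
    have hψ0 : ∀ s ∈ Set.Icc a b, ψ s = 0 := by
      intro s hs
      have h1 : 0 ≤ ψ s :=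
        intervalIntegral.integral_nonneg hs.1 fun x _ => sq_nonneg _
      have h2 : ψ s ≤ ψ b := by
        have : ψ s + ∫ x in s..b, H x ^ 2 = ψ b :=
          intervalIntegral.integral_add_adjacent_intervals
            ((hHcont.pow 2).intervalIntegrable a s) ((hHcont.pow 2).intervalIntegrable s b)
        have h4 : (0:ℝ) ≤ ∫ x in s..b, H x ^ 2 :=
          intervalIntegral.integral_nonneg hs.2 fun x _ => sq_nonneg _
        linarith
      have h3 : ψ b = 0 := hH2
      linarith
    have hd1 : HasDerivWithinAt ψ (H t ^ 2) (Set.Icc a b) t := (hψd t).hasDerivWithinAt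
    have hd2 : HasDerivWithinAt ψ 0 (Set.Icc a b) t :=
      (hasDerivWithinAt_const t _ (0 : ℝ)).congr (fun s hs => hψ0 s hs) (hψ0 t ht)
    have hud := uniqueDiffOn_Icc hab t ht
    have h2 : H t ^ 2 = 0 := by
      rw [← hd1.derivWithin hud, ← hd2.derivWithin hud]
    exact pow_eq_zero_iff two_ne_zero |>.mp h2
  -- conclude via uniqueness of the derivative on `Icc a b`
  have hBv : HasDerivAt (fun t => B t v) (B' t₀ v) t₀ := by
    have := (hB' t₀ ht₀).clm_apply (hasDerivAt_const t₀ v)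
    simpa using this
  have hFc : HasDerivAt (fun t => F t + c) (fA t₀) t₀ := (HF t₀).add_const c
  have heq : Set.EqOn (fun t => B t v) (fun t => F t + c) (Set.Icc a b) := by
    intro s hs
    have h0 := hH0 s hs
    have e1 : q s = c := by simpa [hH_def, sub_eq_zero] using h0
    have e2 : g s - F s = c := by simpa [hq_def] using e1
    have hg' : g s = B s v := hgeq hs
    show B s v = F s + c
    rw [← hg']
    linarith
  have hd1 : HasDerivWithinAt (fun t => B t v) (B' t₀ v) (Set.Icc a b) t₀ :=
    hBv.hasDerivWithinAt
  have hd2 : HasDerivWithinAt (fun t => B t v) (fA t₀) (Set.Icc a b) t₀ :=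
    (hFc.hasDerivWithinAt).congr (fun s hs => heq hs) (heq ht₀)
  have hud := uniqueDiffOn_Icc hab t₀ ht₀
  have hfin : B' t₀ v = fA t₀ := by
    rw [← hd1.derivWithin hud, ← hd2.derivWithin hud]
  rw [hfin]
  exact hfAeq ht₀
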